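/- arXiv:2105.07902 — 2 statements merged into one kernel-verified Lean document; each statement's English description precedes it below -/
import Mathlib

section
/- The ticket lock provides mutual exclusion: if each thread acquiring the lock atomically receives a distinct ticket by fetch-and-increment of a counter head (so tickets are 0, 1, 2, ... in order), and a thread may enter the critical section only when a counter tail equals its ticket, and tail is incremented exactly once per critical section exit, then at any time at most one thread is in the critical section. -/
/-- Mutual exclusion of the ticket lock. Time is modeled by `ℕ`. The counter
`tail` starts at `0` and advances by at most one per step; the thread holding
ticket `t` enters the critical section at a moment where `tail = t` and exits
strictly later; `tail` advances from `t` to `t + 1` only once the holder of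
ticket `t` has exited. Then at any time at most one thread is inside the
critical section. -/
theorem ticket_lock_mutual_exclusion
    (tail : ℕ → ℕ) (enter exit : ℕ → ℕ)
    (htail0 : tail 0 = 0)
    (htailstep : ∀ s, tail (s + 1) = tail s ∨ tail (s + 1) = tail s + 1)
    (henter : ∀ t, tail (enter t) = t)
    (hlt : ∀ t, enter t < exit t)
    (hexit : ∀ s, tail (s + 1) = tail s + 1 → exit (tail s) ≤ s) :
    ∀ (s t₁ t₂ : ℕ),
      enter t₁ ≤ s → s < exit t₁ → enter t₂ ≤ s → s < exit t₂ → t₁ = t₂ := by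
  have mono : Monotone tail := by
    apply monotone_nat_of_le_succ
    intro n
    rcases htailstep n with h | h <;> omega
  -- crossing lemma
  have cross : ∀ a b, a ≤ b → tail a ≤ tail b → ∀ t, tail a ≤ t → t < tail b →
      ∃ s', a ≤ s' ∧ s' < b ∧ tail s' = t ∧ tail (s' + 1) = t + 1 := by
    intro a b hab
    induction b with
    | zero => intro _ t h1 h2; omega
    | succ b ih =>
      intro _ t h1 h2
      rcases Nat.lt_or_ge a (b+1) with hab' | hab'
      · have hab2 : a ≤ b := by omega
        rcases htailstep b with h | h
        · obtain ⟨s', hs⟩ := ih hab2 (mono hab2) t h1 (by omega)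
          exact ⟨s', hs.1, by omega, hs.2.2⟩
        · rcases Nat.lt_or_ge t (tail b) with ht | ht
          · obtain ⟨s', hs⟩ := ih hab2 (mono hab2) t h1 ht
            exact ⟨s', hs.1, by omega, hs.2.2⟩
          · have : tail b = t := by omega
            exact ⟨b, hab2, by omega, this, by omega⟩
      · have ha : a = b + 1 := le_antisymm (by omega) hab'
        subst ha; omega
  -- in critical section implies tail s = t
  have key : ∀ t s, enter t ≤ s → s < exit t → tail s = t := by
    intro t s h1 h2
    have hle : t ≤ tail s := by
      have := mono h1; rw [henter t] at this; exact this
    by_contra hne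
    have hlt' : t < tail s := by omega
    obtain ⟨s', hs1, hs2, hs3, hs4⟩ := cross (enter t) s h1 (by
      have := mono h1; omega) t (by rw [henter t]) hlt'
    have := hexit s' (by omega)
    rw [hs3] at this
    omega
  intro s t₁ t₂ h1 h2 h3 h4
  have := key t₁ s h1 h2
  have := key t₂ s h3 h4
  omega
end

section
/- The ticket lock is FIFO-fair: under the ticket lock model, threads enter the critical section in exactly the order in which they obtained their tickets; that is, if thread A's ticket is smaller than thread B's ticket, then A enters (and exits) the critical section before B enters. -/
/-- FIFO fairness of the ticket lock: threads enter the critical section in the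
exact order of their tickets. If thread `A` holds a smaller ticket than thread
`B`, then `A` enters — and exits — the critical section before `B` enters. -/
theorem ticket_lock_fifo
    (tail : ℕ → ℕ) (enter exit : ℕ → ℕ)
    (htail0 : tail 0 = 0)
    (htailstep : ∀ s, tail (s + 1) = tail s ∨ tail (s + 1) = tail s + 1)
    (henter : ∀ t, tail (enter t) = t)
    (hlt : ∀ t, enter t < exit t)
    (hexit : ∀ s, tail (s + 1) = tail s + 1 → exit (tail s) ≤ s) :
    ∀ tA tB : ℕ, tA < tB →
      enter tA < enter tB ∧ exit tA ≤ enter tB := by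
  have mono : Monotone tail := by
    apply monotone_nat_of_le_succ
    intro n
    rcases htailstep n with h | h <;> omega
  have cross : ∀ N v, v < tail N → ∃ s < N, tail s = v ∧ tail (s + 1) = tail s + 1 := by
    intro N
    induction N with
    | zero => intro v hv; omega
    | succ n ih =>
      intro v hv
      by_cases hcase : v < tail n
      · obtain ⟨s, hs, h1, h2⟩ := ih v hcase
        exact ⟨s, by omega, h1, h2⟩
      · rcases htailstep n with h | h
        · omega
        · exact ⟨n, by omega, by omega, by omega⟩
  intro tA tB hAB
  have hA := henter tA
  have hB := henter tB
  have henterlt : enter tA < enter tB := by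
    by_contra h
    have := mono (show enter tB ≤ enter tA by omega)
    omega
  obtain ⟨s, hs, h1, h2⟩ := cross (enter tB) tA (by omega)
  have := hexit s h2
  rw [h1] at this
  exact ⟨henterlt, by omega⟩
end
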